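/- With the same notation, for integers k ≥ 0, l ≥ 1 with k+l+3 < κ one has T↑(k,l)²/μ(k,l+1) + T↓(k,l)²/μ(k+1,l−1) = μ(k,l)·μ(k+1,l)·(μ(k,l) + μ(k+1,l)). -/

import Mathlib

/-! Both sides carry the factor `[k+1][k+2][l+1]²[k+l+2][k+l+3]/[2]³`. Once it is pulled out, the
identity becomes `[k+2][l+2][k+l+2] + [k+1][l][k+l+3] = [l+1]([k+1][k+l+2] + [k+2][k+l+3])`, which is
`sin(x+t) sin(y+t) sin(x+y) + sin x sin(y-t) sin(x+y+t) = sin y (sin x sin(x+y) + sin(x+t) sin(x+y+t))`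
at `x = (k+1)π/κ`, `y = (l+1)π/κ`, `t = π/κ`. The bound `k+l+3 < κ` makes every quantum integer
that is divided by positive. -/

/-- Quantum integer `[n] = sin(nπ/κ)/sin(π/κ)`. -/
noncomputable def qint (κ : ℕ) (n : ℕ) : ℝ :=
  Real.sin (n * Real.pi / κ) / Real.sin (Real.pi / κ)

/-- Quantum dimension `μ(k,l) = [k+1][l+1][k+l+2]/[2]`. -/
noncomputable def quantumDim (κ k l : ℕ) : ℝ :=
  qint κ (k+1) * qint κ (l+1) * qint κ (k+l+2) / qint κ 2

/-- Squared cell modulus of a pointing-up triangle. -/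
noncomputable def Tup (κ k l : ℕ) : ℝ :=
  qint κ (k+1) * qint κ (k+2) * qint κ (l+1) * qint κ (l+2) *
    qint κ (k+l+2) * qint κ (k+l+3) / (qint κ 2)^2

/-- Squared cell modulus of a pointing-down triangle. -/
noncomputable def Tdown (κ k l : ℕ) : ℝ :=
  qint κ (k+1) * qint κ (k+2) * qint κ l * qint κ (l+1) *
    qint κ (k+l+2) * qint κ (k+l+3) / (qint κ 2)^2

open Real

lemma sin_add_mul_sin_add_mul_sin_add_add_sin_mul_sin_sub_mul_sin_add (x y t : ℝ) :
    sin (x + t) * sin (y + t) * sin (x + y) + sin x * sin (y - t) * sin (x + y + t) =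
      sin y * (sin x * sin (x + y) + sin (x + t) * sin (x + y + t)) := by
  simp only [sin_add, cos_add, sin_sub]
  linear_combination (sin x ^ 2 * sin y * cos y + sin x * cos x * sin y ^ 2) *
    sin_sq_add_cos_sq t

lemma qint_eq_sin_mul_div (κ n : ℕ) : qint κ n = sin (n * (π / κ)) / sin (π / κ) := by
  rw [qint, mul_div_assoc]

lemma qint_exchange (κ k l : ℕ) :
    qint κ (k+2) * qint κ (l+2) * qint κ (k+l+2) + qint κ (k+1) * qint κ l * qint κ (k+l+3) =
      qint κ (l+1) * (qint κ (k+1) * qint κ (k+l+2) + qint κ (k+2) * qint κ (k+l+3)) := by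
  have trig := sin_add_mul_sin_add_mul_sin_add_add_sin_mul_sin_sub_mul_sin_add
    ((k + 1) * (π / κ)) ((l + 1) * (π / κ)) (π / κ)
  simp only [qint_eq_sin_mul_div]
  push_cast
  generalize π / κ = θ at trig ⊢
  ring_nf at trig ⊢
  linear_combination (sin θ)⁻¹ ^ 3 * trig

lemma sin_nat_mul_pi_div_pos {κ n : ℕ} (hn : 0 < n) (hnκ : n < κ) :
    0 < sin (n * (π / κ)) := by
  have hκ : (0 : ℝ) < κ := by exact_mod_cast hn.trans hnκ
  apply sin_pos_of_pos_of_lt_pi (by positivity)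
  rw [← mul_div_assoc, div_lt_iff₀ hκ, mul_comm]
  exact mul_lt_mul_of_pos_left (by exact_mod_cast hnκ) pi_pos

lemma qint_pos {κ n : ℕ} (hn : 0 < n) (hnκ : n < κ) : 0 < qint κ n := by
  have hsin₁ := sin_nat_mul_pi_div_pos (κ := κ) one_pos (by omega)
  rw [Nat.cast_one, one_mul] at hsin₁
  rw [qint_eq_sin_mul_div]
  exact div_pos (sin_nat_mul_pi_div_pos hn hnκ) hsin₁

section

variable (κ k l : ℕ)

lemma Tup_sq_div_quantumDim_add_Tdown_sq_div_quantumDim (hl : 1 ≤ l) (h : k + l + 3 < κ) :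
    Tup κ k l ^ 2 / quantumDim κ k (l+1) + Tdown κ k l ^ 2 / quantumDim κ (k+1) (l-1) =
      qint κ (k+1) * qint κ (k+2) * qint κ (l+1) ^ 2 * qint κ (k+l+2) * qint κ (k+l+3) /
        qint κ 2 ^ 3 *
      (qint κ (k+2) * qint κ (l+2) * qint κ (k+l+2) + qint κ (k+1) * qint κ l * qint κ (k+l+3)) := by
  have ne_zero : ∀ n, 0 < n → n ≤ k + l + 3 → qint κ n ≠ 0 := fun n hn hnk =>
    (qint_pos hn (hnk.trans_lt h)).ne'
  have h2 := ne_zero 2 (by omega) (by omega)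
  have hk1 := ne_zero (k+1) (by omega) (by omega)
  have hk2 := ne_zero (k+2) (by omega) (by omega)
  have hl0 := ne_zero l hl (by omega)
  have hl2 := ne_zero (l+2) (by omega) (by omega)
  have hkl2 := ne_zero (k+l+2) (by omega) (by omega)
  have hkl3 := ne_zero (k+l+3) (by omega) (by omega)
  rw [quantumDim, quantumDim, Tup, Tdown, Nat.sub_add_cancel hl,
    show k + 1 + (l - 1) + 2 = k + l + 2 by omega, show k + (l + 1) + 2 = k + l + 3 by omega,
    show l + 1 + 1 = l + 2 by omega, show k + 1 + 1 = k + 2 by omega]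
  field_simp

lemma quantumDim_mul_quantumDim_mul_add :
    quantumDim κ k l * quantumDim κ (k+1) l * (quantumDim κ k l + quantumDim κ (k+1) l) =
      qint κ (k+1) * qint κ (k+2) * qint κ (l+1) ^ 2 * qint κ (k+l+2) * qint κ (k+l+3) /
        qint κ 2 ^ 3 *
      (qint κ (l+1) * (qint κ (k+1) * qint κ (k+l+2) + qint κ (k+2) * qint κ (k+l+3))) := by
  rw [quantumDim, quantumDim, show k + 1 + 1 = k + 2 by omega,
    show k + 1 + l + 2 = k + l + 3 by omega]
  ring

end

theorem typeII_double_deg_Ak_general (κ k l : ℕ) (hl : 1 ≤ l)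
    (h : k + l + 3 < κ) :
    Tup κ k l ^ 2 / quantumDim κ k (l+1) + Tdown κ k l ^ 2 / quantumDim κ (k+1) (l-1) =
      quantumDim κ k l * quantumDim κ (k+1) l *
        (quantumDim κ k l + quantumDim κ (k+1) l) := by
  rw [Tup_sq_div_quantumDim_add_Tdown_sq_div_quantumDim κ k l hl h,
    quantumDim_mul_quantumDim_mul_add, qint_exchange]

theorem typeII_double_deg_Ak (κ k l : ℕ) (hκ : 2 ≤ κ) (hl : 1 ≤ l)
    (h : k + l + 3 < κ) :
    Tup κ k l ^ 2 / quantumDim κ k (l+1) + Tdown κ k l ^ 2 / quantumDim κ (k+1) (l-1) =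
      quantumDim κ k l * quantumDim κ (k+1) l *
        (quantumDim κ k l + quantumDim κ (k+1) l) :=
  typeII_double_deg_Ak_general κ k l hl h
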